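/- arXiv:1609.01907 — 2 statements merged into one kernel-verified Lean document; each statement's English description precedes it below -/
import Mathlib

section
/- Let X be a geodesic δ-hyperbolic metric space (δ > 0) with the property that any continuous path between the endpoints of a geodesic that avoids a ball B(z,r) centred at a point z of that geodesic has length at least 2^{(r-1)/δ}. Suppose a continuous path c from b to b' avoids the larger ball B(z, 2r) for some point z on a geodesic [b,b'], where r ≥ 1. Then the image of c cannot be covered by fewer than 2^{(r-1)/δ}/(2r) balls of radius r. -/
/-!
Walk along `c` through the cover greedily: from the current time, stay with one ball until `c`
leaves it for good. Each ball is used at most once, so this yields times `0 = t₀ ≤ ⋯ ≤ t_N = 1`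
with `d(c tₘ, c tₘ₊₁) ≤ 2r`. Joining consecutive points `c tₘ` by geodesics gives a path from `b`
to `b'` of length at most `2rN`; each of its points is within `r` of some `c tₘ`, which lies
outside `B(z, 2r)`, so the path avoids `B(z, r)` and its length is at least `2^((r-1)/δ)`.
-/

open Set Metric

/-- `g` parametrizes a geodesic segment from `b` to `c` (by arclength on
`[0, d(b,c)]`). -/
def IsGeodesicSeg {X : Type*} [MetricSpace X] (g : ℝ → X) (b c : X) : Prop :=
  g 0 = b ∧ g (dist b c) = c ∧
    ∀ u ∈ Icc 0 (dist b c), ∀ v ∈ Icc 0 (dist b c), dist (g u) (g v) = |u - v|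

open scoped NNReal Topology

section Geodesic

variable {X : Type*} [MetricSpace X] {g : ℝ → X} {b c : X}

theorem IsGeodesicSeg.dist_add_dist_eq (hg : IsGeodesicSeg g b c) {u : ℝ}
    (hu : u ∈ Icc 0 (dist b c)) : dist b (g u) + dist (g u) c = dist b c := by
  obtain ⟨hg0, hg1, hiso⟩ := hg
  have hb : dist b (g u) = u := by
    rw [← hg0, hiso 0 ⟨le_rfl, dist_nonneg⟩ u hu, zero_sub, abs_neg, abs_of_nonneg hu.1]
  have hc : dist (g u) c = dist b c - u := by
    conv_lhs => rw [← hg1]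
    rw [hiso u hu _ ⟨dist_nonneg, le_rfl⟩, abs_sub_comm, abs_of_nonneg (sub_nonneg.2 hu.2)]
  linarith

theorem IsGeodesicSeg.lipschitzOnWith_unitInterval (hg : IsGeodesicSeg g b c) :
    LipschitzOnWith (nndist b c) (fun s => g (dist b c * s)) (Icc 0 1) := by
  have hmem : ∀ s ∈ Icc (0 : ℝ) 1, dist b c * s ∈ Icc 0 (dist b c) := fun s hs =>
    ⟨mul_nonneg dist_nonneg hs.1, mul_le_of_le_one_right dist_nonneg hs.2⟩
  refine LipschitzOnWith.of_dist_le_mul fun s hs t ht => ?_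
  rw [hg.2.2 _ (hmem s hs) _ (hmem t ht), ← mul_sub, abs_mul, abs_of_nonneg dist_nonneg,
    coe_nndist, Real.dist_eq]

end Geodesic

theorem le_dist_of_dist_add_dist_eq {X : Type*} [PseudoMetricSpace X] {p q p' z : X} {ρ : ℝ}
    (hq : dist p q + dist q p' = dist p p') (hpp' : dist p p' ≤ 2 * ρ)
    (hp : 2 * ρ ≤ dist p z) (hp' : 2 * ρ ≤ dist p' z) : ρ ≤ dist q z := by
  have := dist_triangle p q z
  have := dist_triangle_left p' z q
  linarith

section Lipschitz

variable {X : Type*} [PseudoMetricSpace X]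

theorem LipschitzOnWith.Icc_union_Icc {f : ℝ → X} {K : ℝ≥0} {a b c : ℝ}
    (hab : LipschitzOnWith K f (Icc a b)) (hbc : LipschitzOnWith K f (Icc b c)) :
    LipschitzOnWith K f (Icc a c) := by
  refine LipschitzOnWith.of_dist_le_mul fun x hx y hy => ?_
  wlog hxy : x ≤ y generalizing x y
  · rw [dist_comm, dist_comm x]
    exact this y hy x hx (le_of_not_ge hxy)
  rcases le_total y b with hyb | hby
  · exact hab.dist_le_mul x ⟨hx.1, hxy.trans hyb⟩ y ⟨hy.1, hyb⟩
  rcases le_total b x with hbx | hxb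
  · exact hbc.dist_le_mul x ⟨hbx, hx.2⟩ y ⟨hbx.trans hxy, hy.2⟩
  calc dist (f x) (f y) ≤ dist (f x) (f b) + dist (f b) (f y) := dist_triangle _ _ _
    _ ≤ K * dist x b + K * dist b y :=
        add_le_add (hab.dist_le_mul x ⟨hx.1, hxb⟩ b ⟨hx.1.trans hxb, le_rfl⟩)
          (hbc.dist_le_mul b ⟨le_rfl, hby.trans hy.2⟩ y ⟨hby, hy.2⟩)
    _ = K * dist x y := by
        rw [Real.dist_eq, Real.dist_eq, Real.dist_eq, abs_of_nonpos (by linarith),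
          abs_of_nonpos (by linarith), abs_of_nonpos (by linarith)]
        ring

theorem LipschitzOnWith.eVariationOn_Icc_le {f : ℝ → X} {K : ℝ≥0} {a b : ℝ}
    (hf : LipschitzOnWith K f (Icc a b)) :
    eVariationOn f (Icc a b) ≤ K * ENNReal.ofReal (b - a) := by
  simpa [eVariationOn_id_Icc] using hf.comp_eVariationOn_le (g := id) (mapsTo_id _)

end Lipschitz

section Concat

variable {X : Type*}

noncomputable def concatUnitPaths (σ : ℕ → ℝ → X) (u : ℝ) : X :=
  σ ⌊u⌋₊ (u - ⌊u⌋₊)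

theorem concatUnitPaths_natCast (σ : ℕ → ℝ → X) (m : ℕ) : concatUnitPaths σ m = σ m 0 := by
  simp [concatUnitPaths]

theorem concatUnitPaths_of_mem_Icc {σ : ℕ → ℝ → X} (hσ : ∀ m, σ m 1 = σ (m + 1) 0) {m : ℕ}
    {u : ℝ} (hu : u ∈ Icc (m : ℝ) (m + 1)) : concatUnitPaths σ u = σ m (u - m) := by
  rcases hu.2.eq_or_lt with rfl | hlt
  · rw [← Nat.cast_succ, concatUnitPaths_natCast, ← hσ]
    push_cast
    ring_nf
  · rw [concatUnitPaths, Nat.floor_eq_on_Ico m u ⟨hu.1, hlt⟩]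

theorem exists_concatUnitPaths_eq (σ : ℕ → ℝ → X) {u : ℝ} (hu : 0 ≤ u) :
    ∃ m, ∃ s ∈ Icc (0 : ℝ) 1, concatUnitPaths σ u = σ m s :=
  ⟨⌊u⌋₊, u - ⌊u⌋₊, ⟨sub_nonneg.2 (Nat.floor_le hu), by linarith [Nat.lt_floor_add_one u]⟩, rfl⟩

theorem lipschitzOnWith_concatUnitPaths [PseudoMetricSpace X] {σ : ℕ → ℝ → X} {K : ℝ≥0}
    (hσ : ∀ m, σ m 1 = σ (m + 1) 0) (hlip : ∀ m, LipschitzOnWith K (σ m) (Icc 0 1)) (n : ℕ) :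
    LipschitzOnWith K (concatUnitPaths σ) (Icc 0 n) := by
  have hpiece : ∀ m : ℕ, LipschitzOnWith K (concatUnitPaths σ) (Icc (m : ℝ) (m + 1)) := by
    refine fun m => LipschitzOnWith.of_dist_le_mul fun x hx y hy => ?_
    rw [concatUnitPaths_of_mem_Icc hσ hx, concatUnitPaths_of_mem_Icc hσ hy,
      ← dist_sub_right x y m]
    exact (hlip m).dist_le_mul _ ⟨sub_nonneg.2 hx.1, by linarith [hx.2]⟩
      _ ⟨sub_nonneg.2 hy.1, by linarith [hy.2]⟩
  induction n with
  | zero => exact (hpiece 0).mono (Icc_subset_Icc (by simp) (by simp))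
  | succ n ih => simpa using ih.Icc_union_Icc (hpiece n)

end Concat

theorem exists_piecewise_geodesic_path {X : Type*} [MetricSpace X]
    (hgeod : ∀ b c : X, ∃ g : ℝ → X, IsGeodesicSeg g b c) (q : ℕ → X) {L : ℝ≥0}
    (hq : ∀ m, dist (q m) (q (m + 1)) ≤ L) (n : ℕ) :
    ∃ γ : ℝ → X, γ 0 = q 0 ∧ γ 1 = q n ∧ LipschitzOnWith (L * n) γ (Icc 0 1) ∧
      ∀ t ∈ Icc (0 : ℝ) 1, ∃ m,
        dist (q m) (γ t) + dist (γ t) (q (m + 1)) = dist (q m) (q (m + 1)) := by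
  choose G hG using fun m => hgeod (q m) (q (m + 1))
  set σ : ℕ → ℝ → X := fun m s => G m (dist (q m) (q (m + 1)) * s)
  have hσ0 : ∀ m, σ m 0 = q m := fun m => by simpa [σ] using (hG m).1
  have hσ : ∀ m, σ m 1 = σ (m + 1) 0 := fun m => by simpa [σ, hσ0] using (hG m).2.1
  have hscale : LipschitzWith n (fun t : ℝ => n * t) :=
    LipschitzWith.of_dist_le_mul fun s t => by simp [Real.dist_eq, ← mul_sub, abs_mul]
  refine ⟨fun t => concatUnitPaths σ (n * t), ?_, ?_, ?_, fun t ht => ?_⟩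
  · simpa [hσ0] using concatUnitPaths_natCast σ 0
  · simpa [hσ0] using concatUnitPaths_natCast σ n
  · exact (lipschitzOnWith_concatUnitPaths hσ
      (fun m => (hG m).lipschitzOnWith_unitInterval.weaken (dist_le_coe.1 (hq m))) n).comp
      hscale.lipschitzOnWith fun t ht =>
        ⟨mul_nonneg n.cast_nonneg ht.1, mul_le_of_le_one_right n.cast_nonneg ht.2⟩
  · obtain ⟨m, s, hs, heq⟩ := exists_concatUnitPaths_eq σ (mul_nonneg n.cast_nonneg ht.1)
    refine ⟨m, ?_⟩
    simp only [heq]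
    exact (hG m).dist_add_dist_eq
      ⟨mul_nonneg dist_nonneg hs.1, mul_le_of_le_one_right dist_nonneg hs.2⟩

theorem Monotone.le_apply_card_of_colour_ne {α ι : Type*} [LinearOrder α] [Fintype ι]
    {T : ℕ → α} (hT : Monotone T) (J : α → ι) {e : α}
    (hJ : ∀ i j, i < j → T j < e → J (T j) ≠ J (T i)) : e ≤ T (Fintype.card ι) := by
  by_contra! h
  obtain ⟨i, j, hij, heq⟩ := Fintype.exists_ne_map_eq_of_card_lt
    (fun k : Fin (Fintype.card ι + 1) => J (T k)) (by simp)
  have hlt : ∀ k : Fin (Fintype.card ι + 1), T k < e := fun k =>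
    (hT (Nat.lt_succ_iff.1 k.2)).trans_lt h
  rcases lt_or_gt_of_ne (Fin.val_injective.ne hij) with hij | hji
  · exact hJ i j hij (hlt j) heq.symm
  · exact hJ j i hji (hlt i) heq

theorem ContinuousOn.exists_exit_time {X : Type*} [TopologicalSpace X] {c : ℝ → X} {a b : ℝ}
    (hc : ContinuousOn c (Icc a b)) {V : Set X} (hV : IsOpen V)
    {u : ℝ} (hu : u ∈ Icc a b) (hcu : c u ∈ V) :
    ∃ t ∈ Icc u b, c t ∈ closure V ∧ ∀ s ∈ Ico t b, c s ∉ V := by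
  set S := {s ∈ Icc u b | c s ∈ V}
  have hS : S.Nonempty := ⟨u, ⟨le_rfl, hu.2⟩, hcu⟩
  have hSb : BddAbove S := ⟨b, fun s hs => hs.1.2⟩
  have ht : sSup S ∈ Icc u b :=
    ⟨le_csSup hSb ⟨⟨le_rfl, hu.2⟩, hcu⟩, csSup_le hS fun s hs => hs.1.2⟩
  have htab : sSup S ∈ Icc a b := ⟨hu.1.trans ht.1, ht.2⟩
  refine ⟨sSup S, ht, ?_, fun s hs hsV => ?_⟩
  · have hcS : ContinuousWithinAt c S (sSup S) :=
      (hc _ htab).mono fun s hs => ⟨hu.1.trans hs.1.1, hs.1.2⟩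
    exact closure_mono (image_subset_iff.2 fun s hs => hs.2)
      (hcS.mem_closure_image (csSup_mem_closure hS hSb))
  · -- `c` stays in the open set `V` a little after `s`, i.e. beyond `sSup S`
    have hsab : s ∈ Ico a b := ⟨htab.1.trans hs.1, hs.2⟩
    have hev : ∀ᶠ s' in 𝓝[>] s, s' ∈ Ioc s b ∧ c s' ∈ V :=
      Filter.Eventually.and (Ioc_mem_nhdsGT hs.2) <|
        ((hc s (Ico_subset_Icc_self hsab)).mono_of_mem_nhdsWithin
          (Icc_mem_nhdsGT_of_mem hsab)) (hV.mem_nhds hsV)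
    obtain ⟨s', hs', hs'V⟩ := hev.exists
    have : s' ≤ sSup S := le_csSup hSb ⟨⟨ht.1.trans (hs.1.trans hs'.1.le), hs'.2⟩, hs'V⟩
    linarith [hs.1, hs'.1]

theorem exists_chain_of_isOpen_cover {X ι : Type*} [TopologicalSpace X] [Fintype ι]
    {c : ℝ → X} (hc : ContinuousOn c (Icc 0 1)) {U : ι → Set X} (hU : ∀ i, IsOpen (U i))
    (hcover : c '' Icc 0 1 ⊆ ⋃ i, U i) :
    ∃ T : ℕ → ℝ, T 0 = 0 ∧ T (Fintype.card ι) = 1 ∧ (∀ m, T m ∈ Icc 0 1) ∧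
      ∀ m, ∃ i, c (T m) ∈ U i ∧ c (T (m + 1)) ∈ closure (U i) := by
  obtain ⟨i₀, -⟩ := mem_iUnion.1 (hcover (mem_image_of_mem c (left_mem_Icc.2 zero_le_one)))
  -- greedy choice: from time `u`, stay in one covering set `U (J u)` until leaving it for good
  have hstep : ∀ u, ∃ i t, u ∈ Icc (0 : ℝ) 1 →
      c u ∈ U i ∧ t ∈ Icc u 1 ∧ c t ∈ closure (U i) ∧ ∀ s ∈ Ico t 1, c s ∉ U i := by
    intro u
    by_cases hu : u ∈ Icc (0 : ℝ) 1
    · obtain ⟨i, hi⟩ := mem_iUnion.1 (hcover (mem_image_of_mem c hu))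
      obtain ⟨t, ht⟩ := hc.exists_exit_time (hU i) hu hi
      exact ⟨i, t, fun _ => ⟨hi, ht⟩⟩
    · exact ⟨i₀, 0, fun h => (hu h).elim⟩
  choose J F hF using hstep
  set T : ℕ → ℝ := fun m => F^[m] 0
  have hTsucc : ∀ m, T (m + 1) = F (T m) := fun m => Function.iterate_succ_apply' F m 0
  have hTmem : ∀ m, T m ∈ Icc 0 1 := by
    intro m
    induction m with
    | zero => exact left_mem_Icc.2 zero_le_one
    | succ m ih =>
      obtain ⟨-, ht, -⟩ := hF _ ih
      exact hTsucc m ▸ ⟨ih.1.trans ht.1, ht.2⟩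
  have hTmono : Monotone T :=
    monotone_nat_of_le_succ fun m => hTsucc m ▸ (hF _ (hTmem m)).2.1.1
  refine ⟨T, rfl, le_antisymm (hTmem _).2 (hTmono.le_apply_card_of_colour_ne J ?_), hTmem,
    fun m => ⟨J (T m), (hF _ (hTmem m)).1, hTsucc m ▸ (hF _ (hTmem m)).2.2.1⟩⟩
  intro i j hij hj heq
  refine (hF _ (hTmem i)).2.2.2 (T j) ⟨?_, hj⟩ (heq ▸ (hF _ (hTmem j)).1)
  exact hTsucc i ▸ hTmono hij

theorem exists_chain_of_ball_cover {X ι : Type*} [PseudoMetricSpace X] [Fintype ι]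
    {c : ℝ → X} (hc : ContinuousOn c (Icc 0 1)) {x : ι → X} {r : ℝ}
    (hcover : c '' Icc 0 1 ⊆ ⋃ i, ball (x i) r) :
    ∃ T : ℕ → ℝ, T 0 = 0 ∧ T (Fintype.card ι) = 1 ∧ (∀ m, T m ∈ Icc 0 1) ∧
      ∀ m, dist (c (T m)) (c (T (m + 1))) ≤ 2 * r := by
  obtain ⟨T, hT0, hT1, hTmem, hT⟩ := exists_chain_of_isOpen_cover hc (fun _ => isOpen_ball) hcover
  refine ⟨T, hT0, hT1, hTmem, fun m => ?_⟩
  obtain ⟨i, hi, hi'⟩ := hT m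
  have := closure_ball_subset_closedBall hi'
  calc dist (c (T m)) (c (T (m + 1))) ≤ dist (c (T m)) (x i) + dist (c (T (m + 1))) (x i) :=
        dist_triangle_right _ _ _
    _ ≤ 2 * r := by linarith [mem_ball.1 hi, mem_closedBall.1 this]

theorem covering_number_lower_bound_general {X : Type*} [MetricSpace X] (δ : ℝ)
    (r : ℝ)
    (hgeod : ∀ b c : X, ∃ g : ℝ → X, IsGeodesicSeg g b c)
    (havoidlen : ∀ (b c : X) (g : ℝ → X), IsGeodesicSeg g b c →
      ∀ z ∈ g '' Icc 0 (dist b c), ∀ γ : ℝ → X, ContinuousOn γ (Icc 0 1) →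
      γ 0 = b → γ 1 = c → (∀ t ∈ Icc (0:ℝ) 1, γ t ∉ ball z r) →
      ENNReal.ofReal (2 ^ ((r - 1) / δ)) ≤ eVariationOn γ (Icc 0 1))
    (b b' : X) (g : ℝ → X) (hg : IsGeodesicSeg g b b')
    (z : X) (hz : z ∈ g '' Icc 0 (dist b b'))
    (c : ℝ → X) (hccont : ContinuousOn c (Icc 0 1)) (hc0 : c 0 = b) (hc1 : c 1 = b')
    (havoid : ∀ t ∈ Icc (0:ℝ) 1, c t ∉ ball z (2 * r))
    (N : ℕ) (x : Fin N → X) (hcover : c '' Icc 0 1 ⊆ ⋃ i, ball (x i) r) :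
    2 ^ ((r - 1) / δ) / (2 * r) ≤ (N : ℝ) := by
  obtain ⟨i, hi⟩ := mem_iUnion.1 (hcover (mem_image_of_mem c (left_mem_Icc.2 zero_le_one)))
  have hr : 0 < r := pos_of_mem_ball hi
  obtain ⟨T, hT0, hTN, hTmem, hTdist⟩ := exists_chain_of_ball_cover hccont hcover
  rw [Fintype.card_fin] at hTN
  obtain ⟨γ, hγ0, hγ1, hγlip, hγmem⟩ := exists_piecewise_geodesic_path hgeod
    (fun m => c (T m)) (L := (2 * r).toNNReal)
    (fun m => (hTdist m).trans_eq (Real.coe_toNNReal _ (by positivity)).symm) N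
  have hfar : ∀ m, 2 * r ≤ dist (c (T m)) z := fun m => not_lt.1 (havoid _ (hTmem m))
  have hγavoid : ∀ t ∈ Icc (0 : ℝ) 1, γ t ∉ ball z r := fun t ht => by
    obtain ⟨m, hm⟩ := hγmem t ht
    exact not_lt.2 (le_dist_of_dist_add_dist_eq hm (hTdist m) (hfar m) (hfar (m + 1)))
  have hlen := (havoidlen b b' g hg z hz γ hγlip.continuousOn (by rw [hγ0, hT0, hc0])
    (by rw [hγ1, hTN, hc1]) hγavoid).trans hγlip.eVariationOn_Icc_le
  rw [sub_zero, ENNReal.ofReal_one, mul_one, ← ENNReal.ofReal_coe_nnreal,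
    ENNReal.ofReal_le_ofReal_iff (by positivity)] at hlen
  rw [div_le_iff₀ (by positivity)]
  simpa [hr.le, mul_comm] using hlen

/-- in a geodesic `δ`-hyperbolic space in which any continuous path
between the endpoints of a geodesic avoiding a ball `B(z,r)` centred at a point
`z` of that geodesic has length at least `2^((r-1)/δ)`, if a continuous path `c`
from `b` to `b'` avoids the larger ball `B(z, 2r)` for a point `z` on a geodesic
`[b,b']` (with `r ≥ 1`), then the image of `c` cannot be covered by fewer than
`2^((r-1)/δ)/(2r)` balls of radius `r`. -/
theorem covering_number_lower_bound {X : Type*} [MetricSpace X] (δ : ℝ) (hδ : 0 < δ)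
    (r : ℝ) (hr : 1 ≤ r)
    (hgeod : ∀ b c : X, ∃ g : ℝ → X, IsGeodesicSeg g b c)
    (havoidlen : ∀ (b c : X) (g : ℝ → X), IsGeodesicSeg g b c →
      ∀ z ∈ g '' Icc 0 (dist b c), ∀ γ : ℝ → X, ContinuousOn γ (Icc 0 1) →
      γ 0 = b → γ 1 = c → (∀ t ∈ Icc (0:ℝ) 1, γ t ∉ ball z r) →
      ENNReal.ofReal (2 ^ ((r - 1) / δ)) ≤ eVariationOn γ (Icc 0 1))
    (b b' : X) (g : ℝ → X) (hg : IsGeodesicSeg g b b')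
    (z : X) (hz : z ∈ g '' Icc 0 (dist b b'))
    (c : ℝ → X) (hccont : ContinuousOn c (Icc 0 1)) (hc0 : c 0 = b) (hc1 : c 1 = b')
    (havoid : ∀ t ∈ Icc (0:ℝ) 1, c t ∉ ball z (2 * r))
    (N : ℕ) (x : Fin N → X) (hcover : c '' Icc 0 1 ⊆ ⋃ i, ball (x i) r) :
    2 ^ ((r - 1) / δ) / (2 * r) ≤ (N : ℝ) :=
  covering_number_lower_bound_general δ r hgeod havoidlen b b' g hg z hz c hccont hc0 hc1 havoid N x
    hcover
end

section
/- Let f_n : [0,1] → M_n be continuous maps into metric spaces (M_n, d_n, base point f_n(0)), and let e : [0,1] → ℝ code a pseudometric d_e with quotient metric space T_e pointed at the class of 0. If sup_{s,t ∈ [0,1]} |d_n(f_n(s), f_n(t)) - d_e(s,t)| → 0 as n → ∞, then the pointed compact metric spaces (image of f_n, d_n, f_n(0)) converge to (T_e, d_e, class of 0) in the pointed Gromov–Hausdorff topology. -/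
/-!
Parametrizing both the range of `f n` and the tree `T` by `[0,1]` gives the correspondence
`{(f n s, p s) : s ∈ [0,1]}`, which matches the base points and whose distortion is exactly the
supremum in the hypothesis. Hence the pointed Gromov–Hausdorff distance is at most half of
that supremum, which tends to `0`.
-/

open Set Filter

/-- The excursion pseudometric `d_e(s,t) = e s + e t - 2 inf_{u between s,t} e u`. -/
noncomputable def excDist (e : ℝ → ℝ) (s t : ℝ) : ℝ :=
  e s + e t - 2 * sInf (e '' Set.uIcc s t)

/-- `R` is a correspondence between `X` and `Y`. -/
def IsCorrespondence {X Y : Type*} (R : Set (X × Y)) : Prop :=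
  (∀ a : X, ∃ b : Y, (a, b) ∈ R) ∧ (∀ b : Y, ∃ a : X, (a, b) ∈ R)

/-- The distortion of a relation `R ⊆ X × Y`. -/
noncomputable def corrDistortion {X Y : Type*} [MetricSpace X] [MetricSpace Y]
    (R : Set (X × Y)) : ℝ :=
  sSup {v | ∃ p ∈ R, ∃ q ∈ R, v = |dist p.1 q.1 - dist p.2 q.2|}

/-- The pointed Gromov–Hausdorff distance, via correspondences matching the
base points. -/
noncomputable def pointedGHDist {X Y : Type*} [MetricSpace X] [MetricSpace Y]
    (x : X) (y : Y) : ℝ :=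
  (1 / 2) * sInf {d | ∃ R : Set (X × Y), IsCorrespondence R ∧ (x, y) ∈ R ∧
    d = corrDistortion R}

open Function

section Correspondence

variable {ι X Y : Type*}

lemma isCorrespondence_range_prodMk {g : ι → X} {h : ι → Y} (hg : Surjective g)
    (hh : Surjective h) : IsCorrespondence (range fun i => (g i, h i)) := by
  constructor
  · intro x
    obtain ⟨i, rfl⟩ := hg x
    exact ⟨h i, i, rfl⟩
  · intro y
    obtain ⟨i, rfl⟩ := hh y
    exact ⟨g i, i, rfl⟩

variable [MetricSpace X] [MetricSpace Y]

lemma corrDistortion_nonneg (R : Set (X × Y)) : 0 ≤ corrDistortion R :=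
  Real.sSup_nonneg <| by
    rintro v ⟨a, -, b, -, rfl⟩
    exact abs_nonneg _

lemma pointedGHDist_nonneg (x : X) (y : Y) : 0 ≤ pointedGHDist x y := by
  refine mul_nonneg (by norm_num) (Real.sInf_nonneg ?_)
  rintro d ⟨R, -, -, rfl⟩
  exact corrDistortion_nonneg R

lemma pointedGHDist_le_corrDistortion {R : Set (X × Y)} (hR : IsCorrespondence R)
    {x : X} {y : Y} (hxy : (x, y) ∈ R) : pointedGHDist x y ≤ corrDistortion R / 2 := by
  have hinf : sInf {d | ∃ R : Set (X × Y), IsCorrespondence R ∧ (x, y) ∈ R ∧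
      d = corrDistortion R} ≤ corrDistortion R := by
    refine csInf_le ⟨0, ?_⟩ ⟨R, hR, hxy, rfl⟩
    rintro d ⟨R', -, -, rfl⟩
    exact corrDistortion_nonneg R'
  unfold pointedGHDist
  linarith

lemma corrDistortion_range_prodMk (g : ι → X) (h : ι → Y) :
    corrDistortion (range fun i => (g i, h i)) =
      sSup {v | ∃ i j, v = |dist (g i) (g j) - dist (h i) (h j)|} := by
  unfold corrDistortion
  congr 1
  ext v
  constructor
  · rintro ⟨-, ⟨i, rfl⟩, -, ⟨j, rfl⟩, rfl⟩
    exact ⟨i, j, rfl⟩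
  · rintro ⟨i, j, rfl⟩
    exact ⟨_, ⟨i, rfl⟩, _, ⟨j, rfl⟩, rfl⟩

lemma pointedGHDist_le_of_surjective {g : ι → X} {h : ι → Y} (hg : Surjective g)
    (hh : Surjective h) (i : ι) :
    pointedGHDist (g i) (h i) ≤
      sSup {v | ∃ i j, v = |dist (g i) (g j) - dist (h i) (h j)|} / 2 := by
  rw [← corrDistortion_range_prodMk]
  exact pointedGHDist_le_corrDistortion (isCorrespondence_range_prodMk hg hh) ⟨i, rfl⟩

end Correspondence

/-- if the distance functions along paths `f n` converge
uniformly to the excursion pseudometric `d_e`, then the pointed ranges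
`(f n '' [0,1], d_n, f n 0)` converge in the pointed Gromov–Hausdorff topology
to the quotient metric tree `T_e = [0,1]/{d_e = 0}` (given here as any metric
space `T` together with a surjective projection `p` realizing `d_e`, pointed at
`p 0`). -/
theorem range_converges_to_tree
    (e : ℝ → ℝ)
    (M : ℕ → Type*) [∀ n, MetricSpace (M n)]
    (f : ∀ n, ℝ → M n)
    (T : Type*) [MetricSpace T] (p : ℝ → T)
    (hp_surj : ∀ x : T, ∃ s ∈ Icc (0:ℝ) 1, p s = x)
    (hp_dist : ∀ s ∈ Icc (0:ℝ) 1, ∀ t ∈ Icc (0:ℝ) 1, dist (p s) (p t) = excDist e s t)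
    (hconv : Tendsto
      (fun n => sSup {v | ∃ s ∈ Icc (0:ℝ) 1, ∃ t ∈ Icc (0:ℝ) 1,
        v = |dist (f n s) (f n t) - excDist e s t|}) atTop (nhds 0)) :
    Tendsto (fun n => pointedGHDist
        (⟨f n 0, Set.mem_image_of_mem _ (by norm_num : (0:ℝ) ∈ Icc (0:ℝ) 1)⟩ :
          ↥(f n '' Icc 0 1))
        (p 0)) atTop (nhds 0) := by
  have hp_restrict : Surjective ((Icc (0:ℝ) 1).domRestrict p) := fun x => by
    obtain ⟨s, hs, rfl⟩ := hp_surj x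
    exact ⟨⟨s, hs⟩, rfl⟩
  refine squeeze_zero (fun n => pointedGHDist_nonneg _ _) (fun n => ?_)
    (by simpa using hconv.div_const 2)
  refine (pointedGHDist_le_of_surjective imageFactorization_surjective hp_restrict
    ⟨0, by norm_num⟩).trans_eq ?_
  congr 2
  ext v
  simp only [Subtype.exists, mem_ofPred_eq, Subtype.dist_eq, imageFactorization,
    domRestrict_apply, exists_prop]
  constructor <;> rintro ⟨s, hs, t, ht, rfl⟩ <;> exact ⟨s, hs, t, ht, by rw [hp_dist s hs t ht]⟩
end
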